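/- For the Inoue S_M double complex (any α ≠ 0, β ∈ R), the non-Kählerness degrees are Δ¹ = 0 and Δ² = 2, where Δ^k = Σ_{p+q=k} (h^{p,q}_BC + h^{2-q,2-p}_BC) - 2 b_k and the Betti numbers are b1 = 1 (generated by φ2 - φ̄2), b2 = 0, b3 = 1. -/

import Mathlib

open Finset Module Complex

noncomputable section

/-- Index type: subsets of the 4 generators. Generators: 0 ↦ φ1, 1 ↦ φ2, 2 ↦ φ̄1, 3 ↦ φ̄2. -/
abbrev ι : Type := Finset (Fin 4)

/-- The underlying 16-dimensional vector space of Λ⟨φ1,φ2,φ̄1,φ̄2⟩. -/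
abbrev V : Type := ι → ℂ

/-- Basis vector corresponding to the wedge of the generators in `S` (in increasing order). -/
def e (S : ι) : V := fun T => if T = S then 1 else 0

/-- Structure constants of the exterior (wedge) product on basis elements. -/
def wedgeB (S T : ι) : V :=
  if Disjoint S T then
    ((-1 : ℂ) ^ (((S ×ˢ T).filter (fun x => x.2 < x.1)).card)) • e (S ∪ T)
  else 0

/-- The wedge product on `V`. -/
def mulV (v w : V) : V := ∑ S : ι, ∑ T : ι, (v S * w T) • wedgeB S T

/-- The odd derivation determined by its values `g` on the generators. -/
def der (g : Fin 4 → V) : V →ₗ[ℂ] V :=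
  (Pi.basisFun ℂ ι).constr ℂ (fun S =>
    ∑ i ∈ S, ((-1 : ℂ) ^ ((S.filter (fun j => j < i)).card)) •
      mulV (g i) (e (S.erase i)))

/-- Holomorphic degree of a basis index. -/
def pdeg (S : ι) : ℕ := (S ∩ ({0, 1} : Finset (Fin 4))).card

/-- Anti-holomorphic degree of a basis index. -/
def qdeg (S : ι) : ℕ := (S ∩ ({2, 3} : Finset (Fin 4))).card

/-- The bidegree-(p,q) component `A^{p,q}`. -/
def Apq (p q : ℕ) : Submodule ℂ V :=
  Submodule.span ℂ ((fun S => e S) '' {S : ι | pdeg S = p ∧ qdeg S = q})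

/-- The total-degree-k component `A^k`. -/
def Ak (k : ℕ) : Submodule ℂ V :=
  Submodule.span ℂ ((fun S => e S) '' {S : ι | S.card = k})

/-- Dimension of Dolbeault cohomology `H^{p,q}_∂̄ = ker ∂̄ / im ∂̄` in bidegree (p,q). -/
def hD (delbar : V →ₗ[ℂ] V) (p q : ℕ) : ℕ :=
  finrank ℂ (↥(Apq p q ⊓ LinearMap.ker delbar) ⧸
    Submodule.comap (Apq p q ⊓ LinearMap.ker delbar).subtype
      (Submodule.map delbar (Apq p (q - 1))))

/-- Dimension of Bott-Chern cohomology `H^{p,q}_BC = (ker ∂ ∩ ker ∂̄)/im ∂∂̄` in bidegree (p,q). -/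
def hBC (del delbar : V →ₗ[ℂ] V) (p q : ℕ) : ℕ :=
  finrank ℂ (↥(Apq p q ⊓ LinearMap.ker del ⊓ LinearMap.ker delbar) ⧸
    Submodule.comap (Apq p q ⊓ LinearMap.ker del ⊓ LinearMap.ker delbar).subtype
      (Submodule.map (del ∘ₗ delbar) (Apq (p - 1) (q - 1))))

/-- Dimension of Aeppli cohomology `H^{p,q}_A = ker ∂∂̄ / (im ∂ + im ∂̄)` in bidegree (p,q). -/
def hA (del delbar : V →ₗ[ℂ] V) (p q : ℕ) : ℕ :=
  finrank ℂ (↥(Apq p q ⊓ LinearMap.ker (del ∘ₗ delbar)) ⧸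
    Submodule.comap (Apq p q ⊓ LinearMap.ker (del ∘ₗ delbar)).subtype
      (Submodule.map del (Apq (p - 1) q) ⊔ Submodule.map delbar (Apq p (q - 1))))

/-- Dimension of the degree-k de Rham cohomology of the total complex with `d = ∂ + ∂̄`. -/
def betti (d : V →ₗ[ℂ] V) (k : ℕ) : ℕ :=
  finrank ℂ (↥(Ak k ⊓ LinearMap.ker d) ⧸
    Submodule.comap (Ak k ⊓ LinearMap.ker d).subtype
      (Submodule.map d (Ak (k - 1))))

/-- The coefficient c = (α - iβ)/(2i) of the Inoue S_M model. -/
def cSM (α β : ℝ) : ℂ := ((α : ℂ) - Complex.I * (β : ℂ)) / (2 * Complex.I)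

/-- The `∂` operator of the Inoue S_M model: ∂φ1 = c φ1∧φ2, ∂φ2 = 0,
∂φ̄1 = conj(c) φ2∧φ̄1 (conjugate relation), ∂φ̄2 = -iα φ2∧φ̄2. -/
def delSM (α β : ℝ) : V →ₗ[ℂ] V :=
  der ![cSM α β • e {0, 1}, 0, (starRingEnd ℂ (cSM α β)) • e {1, 2},
        (-(Complex.I * (α : ℂ))) • e {1, 3}]

/-- The `∂̄` operator of the Inoue S_M model: ∂̄φ1 = -c φ1∧φ̄2, ∂̄φ2 = -iα φ2∧φ̄2,
∂̄φ̄1 = conj(c) φ̄1∧φ̄2, ∂̄φ̄2 = 0. -/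
def delbarSM (α β : ℝ) : V →ₗ[ℂ] V :=
  der ![(-cSM α β) • e {0, 3}, (-(Complex.I * (α : ℂ))) • e {1, 3},
        (starRingEnd ℂ (cSM α β)) • e {2, 3}, 0]

/-- The total differential of the Inoue S_M complex. -/
def dSM (α β : ℝ) : V →ₗ[ℂ] V := delSM α β + delbarSM α β

/-!
Everything is linear algebra on the 16 basis wedges. Evaluating `∂` and `∂̄` on them, each kernel
is computed coordinatewise; `α ≠ 0` enters through the nonvanishing of `c`, `c̄ = c + iα` and `iα`.
The relation `c̄ = c + iα` also makes `∂̄(φ1∧φ2∧φ̄1)` and `∂(φ1∧φ̄1∧φ̄2)` vanish, so all of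
`A^{2,1}` and `A^{1,2}` is `∂`- and `∂̄`-closed, and `∂∂̄` hits a line in each.
For the Betti numbers, the kernel of `d` on `A²` is exactly `d(A¹)` and `d` vanishes on `A³`;
rank–nullity then gives `dim d(A²) = 6 - dim d(A¹) = 6 - (4 - 1) = 3`, hence `b₃ = 4 - 3`.
-/

open Submodule

section LinearAlgebra

variable {K M M₂ : Type*} [DivisionRing K] [AddCommGroup M] [Module K M]
  [AddCommGroup M₂] [Module K M₂]

theorem finrank_comap_subtype (p q : Submodule K M) :
    finrank K (q.comap p.subtype) = finrank K ↥(p ⊓ q) := by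
  rw [← map_comap_subtype, finrank_map_subtype_eq]

variable [FiniteDimensional K M]

theorem finrank_quotient_comap_subtype (N D : Submodule K M) :
    finrank K (N ⧸ D.comap N.subtype) = finrank K N - finrank K ↥(N ⊓ D) := by
  rw [finrank_quotient, finrank_comap_subtype]

theorem finrank_map_add_finrank_inf_ker (f : M →ₗ[K] M₂) (p : Submodule K M) :
    finrank K (p.map f) + finrank K ↥(p ⊓ LinearMap.ker f) = finrank K p := by
  rw [← LinearMap.range_domRestrict, ← finrank_comap_subtype, ← LinearMap.ker_domRestrict]
  exact LinearMap.finrank_range_add_finrank_ker _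

end LinearAlgebra

section StandardBasis

@[simp] theorem e_apply (S T : ι) : e S T = if T = S then 1 else 0 := rfl

theorem coe_basisFun_eq_e : ⇑(Pi.basisFun ℂ ι) = e := by
  ext S T
  simp [Pi.single_apply]

theorem e_injective : Function.Injective e :=
  coe_basisFun_eq_e ▸ (Pi.basisFun ℂ ι).injective

theorem e_ne_zero (S : ι) : e S ≠ 0 :=
  coe_basisFun_eq_e ▸ (Pi.basisFun ℂ ι).ne_zero S

theorem mem_span_e_iff {s : Set ι} {v : V} : v ∈ span ℂ (e '' s) ↔ ∀ T ∉ s, v T = 0 := by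
  rw [← coe_basisFun_eq_e, Basis.mem_span_image]
  simp [Set.subset_def, not_imp_comm]

theorem eq_sum_of_mem_span_e {L : Finset ι} {v : V} (hv : v ∈ span ℂ (e '' ↑L)) :
    v = ∑ S ∈ L, v S • e S := by
  ext T
  by_cases hT : T ∈ L <;> simp [Finset.sum_apply, hT, mem_span_e_iff.1 hv]

theorem map_eq_sum_of_mem_span_e (f : V →ₗ[ℂ] V) {L : Finset ι} {v : V}
    (hv : v ∈ span ℂ (e '' ↑L)) : f v = ∑ S ∈ L, v S • f (e S) := by
  conv_lhs => rw [eq_sum_of_mem_span_e hv]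
  simp

theorem finrank_span_e (L : Finset ι) : finrank ℂ (span ℂ (e '' ↑L)) = L.card := by
  rw [← coe_basisFun_eq_e, finrank_span_set_eq_card
    (((Pi.basisFun ℂ ι).linearIndependent.linearIndepOn ↑L).id_image), Set.toFinset_image,
    Finset.toFinset_coe, Finset.card_image_of_injective _ (Pi.basisFun ℂ ι).injective]

theorem Apq_eq_span {p q : ℕ} (L : Finset ι) (hL : ∀ S, pdeg S = p ∧ qdeg S = q ↔ S ∈ L) :
    Apq p q = span ℂ (e '' ↑L) := by
  rw [Apq]; congr; ext S; exact hL S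

theorem Ak_eq_span {k : ℕ} (L : Finset ι) (hL : ∀ S : ι, S.card = k ↔ S ∈ L) :
    Ak k = span ℂ (e '' ↑L) := by
  rw [Ak]; congr; ext S; exact hL S

theorem finrank_Ak (k : ℕ) : finrank ℂ (Ak k) = (4).choose k := by
  rw [Ak_eq_span (powersetCard k univ) (by simp), finrank_span_e, card_powersetCard, card_univ,
    Fintype.card_fin]

end StandardBasis

section Derivations

@[simp] theorem der_e (g : Fin 4 → V) (S : ι) :
    der g (e S) = ∑ i ∈ S, ((-1 : ℂ) ^ #{j ∈ S | j < i}) • mulV (g i) (e (S.erase i)) := by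
  rw [← coe_basisFun_eq_e, der, Basis.constr_basis, coe_basisFun_eq_e]

@[simp] theorem mulV_smul_left (a : ℂ) (v w : V) : mulV (a • v) w = a • mulV v w := by
  simp [mulV, Finset.smul_sum, mul_assoc, smul_smul]

@[simp] theorem mulV_neg_left (v w : V) : mulV (-v) w = -mulV v w := by
  simpa using mulV_smul_left (-1) v w

@[simp] theorem mulV_zero_left (w : V) : mulV 0 w = 0 := by
  simpa using mulV_smul_left 0 0 w

@[simp] theorem mulV_e_e (A B : ι) : mulV (e A) (e B) = if Disjoint A B then
    (-1 : ℂ) ^ #{x ∈ A ×ˢ B | x.2 < x.1} • e (({0, 1, 2, 3} : ι).filter (· ∈ A ∪ B)) else 0 := by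
  rw [Finset.filter_mem_eq_inter, show ({0, 1, 2, 3} : ι) = univ by decide, univ_inter]
  unfold mulV
  rw [Finset.sum_eq_single A, Finset.sum_eq_single B] <;> simp_all [wedgeB]

end Derivations

/- With these, `simp +decide` evaluates `der` on any literal basis wedge: the filter in `mulV_e_e`
turns each union into a sorted literal, so equal wedges of generators become syntactically equal. -/
attribute [local simp] Finset.sum_insert Finset.filter_insert Finset.filter_singleton

section Coefficients

theorem cSM_eq (α β : ℝ) : cSM α β = -(β + I * α) / 2 := by
  rw [cSM, div_eq_div_iff (mul_ne_zero two_ne_zero I_ne_zero) two_ne_zero]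
  ring_nf
  rw [I_sq]
  ring

@[simp] theorem conj_cSM (α β : ℝ) : starRingEnd ℂ (cSM α β) = cSM α β + I * α := by
  rw [cSM_eq]
  simp only [map_div₀, map_neg, map_add, map_mul, conj_ofReal, conj_I, map_ofNat]
  ring

theorem cSM_ne_zero {α : ℝ} (hα : α ≠ 0) (β : ℝ) : cSM α β ≠ 0 := by
  intro h
  have := congrArg im (cSM_eq α β ▸ h)
  simp_all

theorem cSM_add_I_mul_ne_zero {α : ℝ} (hα : α ≠ 0) (β : ℝ) : cSM α β + I * α ≠ 0 := by
  rw [← conj_cSM, map_ne_zero]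
  exact cSM_ne_zero hα β

end Coefficients

section BottChern

variable (α β : ℝ)

theorem hBC_eq_zero_of_eq_bot {del delbar : V →ₗ[ℂ] V} {p q : ℕ}
    (h : Apq p q ⊓ LinearMap.ker del ⊓ LinearMap.ker delbar = ⊥) : hBC del delbar p q = 0 := by
  rw [hBC, finrank_quotient_comap_subtype, h, finrank_bot, Nat.zero_sub]

theorem Apq_one_zero_inf_ker_eq_bot (hα : α ≠ 0) :
    Apq 1 0 ⊓ LinearMap.ker (delSM α β) ⊓ LinearMap.ker (delbarSM α β) = ⊥ := by
  rw [Apq_eq_span {{0}, {1}} (by decide), eq_bot_iff]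
  rintro v ⟨⟨hv, hdel⟩, hdelbar⟩
  simp only [SetLike.mem_coe, LinearMap.mem_ker] at hv hdel hdelbar
  rw [map_eq_sum_of_mem_span_e _ hv] at hdel hdelbar
  have h0 : v {0} = 0 := by simpa +decide [delSM, cSM_ne_zero hα] using congrFun hdel {0, 1}
  have h1 : v {1} = 0 := by simpa +decide [delbarSM, hα] using congrFun hdelbar {1, 3}
  rw [mem_bot, eq_sum_of_mem_span_e hv]
  simp [h0, h1]

theorem Apq_zero_one_inf_ker_eq_bot (hα : α ≠ 0) :
    Apq 0 1 ⊓ LinearMap.ker (delSM α β) ⊓ LinearMap.ker (delbarSM α β) = ⊥ := by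
  rw [Apq_eq_span {{2}, {3}} (by decide), eq_bot_iff]
  rintro v ⟨⟨hv, hdel⟩, -⟩
  simp only [SetLike.mem_coe, LinearMap.mem_ker] at hv hdel
  rw [map_eq_sum_of_mem_span_e _ hv] at hdel
  have h2 : v {2} = 0 := by
    simpa +decide [delSM, cSM_add_I_mul_ne_zero hα] using congrFun hdel {1, 2}
  have h3 : v {3} = 0 := by simpa +decide [delSM, hα] using congrFun hdel {1, 3}
  rw [mem_bot, eq_sum_of_mem_span_e hv]
  simp [h2, h3]

theorem Apq_two_zero_inf_ker_eq_bot (hα : α ≠ 0) :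
    Apq 2 0 ⊓ LinearMap.ker (delSM α β) ⊓ LinearMap.ker (delbarSM α β) = ⊥ := by
  rw [Apq_eq_span {{0, 1}} (by decide), eq_bot_iff]
  rintro v ⟨⟨hv, -⟩, hdelbar⟩
  simp only [SetLike.mem_coe, LinearMap.mem_ker] at hv hdelbar
  rw [map_eq_sum_of_mem_span_e _ hv] at hdelbar
  have h01 : v {0, 1} = 0 := by
    simpa +decide [delbarSM, cSM_add_I_mul_ne_zero hα] using congrFun hdelbar {0, 1, 3}
  rw [mem_bot, eq_sum_of_mem_span_e hv]
  simp [h01]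

theorem Apq_zero_two_inf_ker_eq_bot (hα : α ≠ 0) :
    Apq 0 2 ⊓ LinearMap.ker (delSM α β) ⊓ LinearMap.ker (delbarSM α β) = ⊥ := by
  rw [Apq_eq_span {{2, 3}} (by decide), eq_bot_iff]
  rintro v ⟨⟨hv, hdel⟩, -⟩
  simp only [SetLike.mem_coe, LinearMap.mem_ker] at hv hdel
  rw [map_eq_sum_of_mem_span_e _ hv] at hdel
  have h23 : v {2, 3} = 0 := by
    simpa +decide [delSM, cSM_ne_zero hα] using congrFun hdel {1, 2, 3}
  rw [mem_bot, eq_sum_of_mem_span_e hv]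
  simp [h23]

theorem Apq_one_one_inf_ker_eq_span (hα : α ≠ 0) :
    Apq 1 1 ⊓ LinearMap.ker (delSM α β) ⊓ LinearMap.ker (delbarSM α β) = span ℂ {e {1, 3}} := by
  rw [Apq_eq_span {{0, 2}, {0, 3}, {1, 2}, {1, 3}} (by decide)]
  apply le_antisymm
  · rintro v ⟨⟨hv, hdel⟩, hdelbar⟩
    simp only [SetLike.mem_coe, LinearMap.mem_ker] at hv hdel hdelbar
    rw [map_eq_sum_of_mem_span_e _ hv] at hdel hdelbar
    have h02 : v {0, 2} = 0 := by simpa +decide [delSM, hα] using congrFun hdel {0, 1, 2}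
    have h03 : v {0, 3} = 0 := by
      simpa +decide [delSM, cSM_add_I_mul_ne_zero hα] using congrFun hdel {0, 1, 3}
    have h12 : v {1, 2} = 0 := by
      simpa +decide [delbarSM, cSM_ne_zero hα] using congrFun hdelbar {1, 2, 3}
    rw [eq_sum_of_mem_span_e hv]
    simp [h02, h03, h12, smul_mem, mem_span_singleton_self]
  · rw [span_le, Set.singleton_subset_iff]
    exact ⟨⟨subset_span ⟨{1, 3}, by simp, rfl⟩, by simp +decide [delSM]⟩,
      by simp +decide [delbarSM]⟩

theorem Apq_two_one_le_ker :
    Apq 2 1 ≤ LinearMap.ker (delSM α β) ⊓ LinearMap.ker (delbarSM α β) := by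
  rw [Apq_eq_span {{0, 1, 2}, {0, 1, 3}} (by decide), span_le]
  rintro _ ⟨S, hS, rfl⟩
  simp only [Finset.coe_insert, Finset.coe_singleton, Set.mem_insert_iff,
    Set.mem_singleton_iff] at hS
  rcases hS with rfl | rfl
  · exact ⟨by simp +decide [delSM], by simp +decide [delbarSM]; module⟩
  · exact ⟨by simp +decide [delSM], by simp +decide [delbarSM]⟩

theorem Apq_one_two_le_ker :
    Apq 1 2 ≤ LinearMap.ker (delSM α β) ⊓ LinearMap.ker (delbarSM α β) := by
  rw [Apq_eq_span {{0, 2, 3}, {1, 2, 3}} (by decide), span_le]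
  rintro _ ⟨S, hS, rfl⟩
  simp only [Finset.coe_insert, Finset.coe_singleton, Set.mem_insert_iff,
    Set.mem_singleton_iff] at hS
  rcases hS with rfl | rfl
  · exact ⟨by simp +decide [delSM]; module, by simp +decide [delbarSM]⟩
  · exact ⟨by simp +decide [delSM], by simp +decide [delbarSM]⟩

theorem map_del_delbar_Apq_zero_zero : (Apq 0 0).map (delSM α β ∘ₗ delbarSM α β) = ⊥ := by
  rw [Apq_eq_span {∅} (by decide), map_span]
  simp [delbarSM]

theorem map_del_delbar_Apq_one_zero (hα : α ≠ 0) :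
    (Apq 1 0).map (delSM α β ∘ₗ delbarSM α β) = span ℂ {e {0, 1, 3}} := by
  have h0 : delSM α β (delbarSM α β (e {0})) = -(cSM α β * (cSM α β + I * α)) • e {0, 1, 3} := by
    simp +decide [delSM, delbarSM]
    module
  have h1 : delSM α β (delbarSM α β (e {1})) = 0 := by simp +decide [delSM, delbarSM]
  rw [Apq_eq_span {{0}, {1}} (by decide), map_span, ← Set.image_comp]
  simp only [Finset.coe_insert, Finset.coe_singleton, Set.image_insert_eq, Set.image_singleton,
    Function.comp_apply, LinearMap.coe_comp, h0, h1]
  rw [Set.pair_comm, span_insert_zero]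
  exact span_singleton_smul_eq (by simp [cSM_ne_zero hα, cSM_add_I_mul_ne_zero hα]) _

theorem map_del_delbar_Apq_zero_one (hα : α ≠ 0) :
    (Apq 0 1).map (delSM α β ∘ₗ delbarSM α β) = span ℂ {e {1, 2, 3}} := by
  have h2 : delSM α β (delbarSM α β (e {2})) = (cSM α β * (cSM α β + I * α)) • e {1, 2, 3} := by
    simp +decide [delSM, delbarSM]
    module
  have h3 : delSM α β (delbarSM α β (e {3})) = 0 := by simp +decide [delSM, delbarSM]
  rw [Apq_eq_span {{2}, {3}} (by decide), map_span, ← Set.image_comp]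
  simp only [Finset.coe_insert, Finset.coe_singleton, Set.image_insert_eq, Set.image_singleton,
    Function.comp_apply, LinearMap.coe_comp, h2, h3]
  rw [Set.pair_comm, span_insert_zero]
  exact span_singleton_smul_eq (by simp [cSM_ne_zero hα, cSM_add_I_mul_ne_zero hα]) _

end BottChern

section Betti

variable (α β : ℝ)

theorem dSM_e_zero : dSM α β (e {0}) = cSM α β • (e {0, 1} - e {0, 3}) := by
  simp [dSM, delSM, delbarSM]
  module

theorem dSM_e_one : dSM α β (e {1}) = -(I * α) • e {1, 3} := by
  simp [dSM, delSM, delbarSM]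

theorem dSM_e_two : dSM α β (e {2}) = (cSM α β + I * α) • (e {1, 2} + e {2, 3}) := by
  simp [dSM, delSM, delbarSM]

theorem dSM_e_three : dSM α β (e {3}) = -(I * α) • e {1, 3} := by
  simp [dSM, delSM, delbarSM]

theorem dSM_e_zero_one_sub_e_zero_three : dSM α β (e {0, 1} - e {0, 3}) = 0 := by
  simp +decide [dSM, delSM, delbarSM]

theorem dSM_e_one_three : dSM α β (e {1, 3}) = 0 := by
  simp +decide [dSM, delSM, delbarSM]

theorem dSM_e_one_two_add_e_two_three : dSM α β (e {1, 2} + e {2, 3}) = 0 := by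
  simp +decide [dSM, delSM, delbarSM]

theorem Ak_one_inf_ker_dSM_eq_span (hα : α ≠ 0) :
    Ak 1 ⊓ LinearMap.ker (dSM α β) = span ℂ {e {1} - e {3}} := by
  rw [Ak_eq_span {{0}, {1}, {2}, {3}} (by decide)]
  apply le_antisymm
  · rintro v ⟨hv, hd⟩
    simp only [SetLike.mem_coe, LinearMap.mem_ker] at hv hd
    rw [map_eq_sum_of_mem_span_e _ hv] at hd
    have h0 : v {0} = 0 := by
      simpa +decide [dSM, delSM, delbarSM, cSM_ne_zero hα] using congrFun hd {0, 1}
    have h2 : v {2} = 0 := by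
      simpa +decide [dSM, delSM, delbarSM, cSM_add_I_mul_ne_zero hα] using congrFun hd {1, 2}
    have h3 : v {3} = -v {1} := by
      have h := congrFun hd {1, 3}
      simp +decide [dSM, delSM, delbarSM] at h
      exact mul_right_cancel₀ (by simp [hα] : I * α ≠ 0) (by linear_combination -h)
    rw [eq_sum_of_mem_span_e hv, mem_span_singleton]
    exact ⟨v {1}, by simp +decide [h0, h2, h3]; module⟩
  · rw [span_le, Set.singleton_subset_iff]
    refine ⟨sub_mem (subset_span ⟨{1}, by simp, rfl⟩) (subset_span ⟨{3}, by simp, rfl⟩), ?_⟩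
    simp [dSM_e_one, dSM_e_three]

theorem map_dSM_Ak_zero : (Ak 0).map (dSM α β) = ⊥ := by
  rw [Ak_eq_span {∅} (by decide), map_span]
  simp [dSM, delSM, delbarSM]

theorem Ak_two_inf_ker_dSM_eq_map (hα : α ≠ 0) :
    Ak 2 ⊓ LinearMap.ker (dSM α β) = (Ak 1).map (dSM α β) := by
  have mem_image (i : Fin 4) : dSM α β (e {i}) ∈ (Ak 1).map (dSM α β) :=
    mem_map_of_mem (subset_span ⟨{i}, rfl, rfl⟩)
  have mem_Ak_two (S : ι) (hS : S.card = 2) : e S ∈ Ak 2 := subset_span ⟨S, hS, rfl⟩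
  apply le_antisymm
  · rw [Ak_eq_span {{0, 1}, {0, 2}, {0, 3}, {1, 2}, {1, 3}, {2, 3}} (by decide)]
    rintro v ⟨hv, hd⟩
    simp only [SetLike.mem_coe, LinearMap.mem_ker] at hv hd
    rw [map_eq_sum_of_mem_span_e _ hv] at hd
    have h02 : v {0, 2} = 0 := by
      simpa +decide [dSM, delSM, delbarSM, hα] using congrFun hd {0, 1, 2}
    have h03 : v {0, 3} = -v {0, 1} := by
      have h := congrFun hd {0, 1, 3}
      simp +decide [dSM, delSM, delbarSM] at h
      exact mul_right_cancel₀ (cSM_add_I_mul_ne_zero hα β) (by linear_combination h)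
    have h23 : v {2, 3} = v {1, 2} := by
      have h := congrFun hd {1, 2, 3}
      simp +decide [dSM, delSM, delbarSM] at h
      exact mul_right_cancel₀ (cSM_ne_zero hα β) (by linear_combination h)
    have hd0 := (smul_mem_iff _ (cSM_ne_zero hα β)).1 (dSM_e_zero α β ▸ mem_image 0)
    have hd1 := (smul_mem_iff _ (by simp [hα] : -(I * α) ≠ 0)).1 (dSM_e_one α β ▸ mem_image 1)
    have hd2 := (smul_mem_iff _ (cSM_add_I_mul_ne_zero hα β)).1 (dSM_e_two α β ▸ mem_image 2)
    rw [eq_sum_of_mem_span_e hv]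
    convert add_mem (add_mem (smul_mem _ (v {0, 1}) hd0) (smul_mem _ (v {1, 3}) hd1))
      (smul_mem _ (v {1, 2}) hd2) using 1
    simp +decide [h02, h03, h23]
    module
  · rw [Ak_eq_span {{0}, {1}, {2}, {3}} (by decide), map_span_le]
    rintro _ ⟨S, hS, rfl⟩
    simp only [Finset.coe_insert, Finset.coe_singleton, Set.mem_insert_iff,
      Set.mem_singleton_iff] at hS
    rcases hS with rfl | rfl | rfl | rfl
    · rw [dSM_e_zero]
      exact smul_mem _ _ ⟨sub_mem (mem_Ak_two _ rfl) (mem_Ak_two _ rfl),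
        dSM_e_zero_one_sub_e_zero_three α β⟩
    · rw [dSM_e_one]
      exact smul_mem _ _ ⟨mem_Ak_two _ rfl, dSM_e_one_three α β⟩
    · rw [dSM_e_two]
      exact smul_mem _ _ ⟨add_mem (mem_Ak_two _ rfl) (mem_Ak_two _ rfl),
        dSM_e_one_two_add_e_two_three α β⟩
    · rw [dSM_e_three]
      exact smul_mem _ _ ⟨mem_Ak_two _ rfl, dSM_e_one_three α β⟩

theorem map_dSM_Ak_two_le : (Ak 2).map (dSM α β) ≤ Ak 3 := by
  rw [Ak_eq_span {{0, 1}, {0, 2}, {0, 3}, {1, 2}, {1, 3}, {2, 3}} (by decide),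
    Ak_eq_span {{0, 1, 2}, {0, 1, 3}, {0, 2, 3}, {1, 2, 3}} (by decide), map_span_le]
  rintro _ ⟨S, hS, rfl⟩
  rw [mem_span_e_iff]
  intro T hT
  simp only [Finset.coe_insert, Finset.coe_singleton, Set.mem_insert_iff,
    Set.mem_singleton_iff, not_or] at hS hT
  rcases hS with rfl | rfl | rfl | rfl | rfl | rfl <;> simp +decide [dSM, delSM, delbarSM, hT]

theorem Ak_three_le_ker_dSM : Ak 3 ≤ LinearMap.ker (dSM α β) := by
  rw [Ak_eq_span {{0, 1, 2}, {0, 1, 3}, {0, 2, 3}, {1, 2, 3}} (by decide), span_le]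
  rintro _ ⟨S, hS, rfl⟩
  simp only [Finset.coe_insert, Finset.coe_singleton, Set.mem_insert_iff,
    Set.mem_singleton_iff] at hS
  rcases hS with rfl | rfl | rfl | rfl <;> simp +decide [dSM, delSM, delbarSM] <;> module

end Betti

section Cohomology

variable (α β : ℝ)

theorem e_one_sub_e_three_ne_zero : e {1} - e {3} ≠ 0 :=
  sub_ne_zero.2 (e_injective.ne (by decide))

theorem betti_dSM_one (hα : α ≠ 0) : betti (dSM α β) 1 = 1 := by
  rw [betti, finrank_quotient_comap_subtype, Ak_one_inf_ker_dSM_eq_span α β hα, Nat.sub_self,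
    map_dSM_Ak_zero, inf_bot_eq, finrank_bot,
    finrank_span_singleton e_one_sub_e_three_ne_zero]

theorem betti_dSM_two (hα : α ≠ 0) : betti (dSM α β) 2 = 0 := by
  rw [betti, finrank_quotient_comap_subtype, Ak_two_inf_ker_dSM_eq_map α β hα, inf_idem,
    Nat.sub_self]

theorem finrank_map_dSM_Ak_one (hα : α ≠ 0) : finrank ℂ ((Ak 1).map (dSM α β)) = 3 := by
  have h := finrank_map_add_finrank_inf_ker (dSM α β) (Ak 1)
  rw [Ak_one_inf_ker_dSM_eq_span α β hα, finrank_span_singleton e_one_sub_e_three_ne_zero,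
    finrank_Ak] at h
  simpa using h

theorem betti_dSM_three (hα : α ≠ 0) : betti (dSM α β) 3 = 1 := by
  have h := finrank_map_add_finrank_inf_ker (dSM α β) (Ak 2)
  rw [Ak_two_inf_ker_dSM_eq_map α β hα, finrank_map_dSM_Ak_one α β hα, finrank_Ak] at h
  rw [betti, finrank_quotient_comap_subtype, inf_eq_left.2 (Ak_three_le_ker_dSM α β),
    inf_eq_right.2 (map_dSM_Ak_two_le α β), finrank_Ak]
  simp [Nat.choose] at h ⊢
  omega

theorem hBC_one_one (hα : α ≠ 0) : hBC (delSM α β) (delbarSM α β) 1 1 = 1 := by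
  rw [hBC, finrank_quotient_comap_subtype, Apq_one_one_inf_ker_eq_span α β hα, Nat.sub_self,
    map_del_delbar_Apq_zero_zero, inf_bot_eq, finrank_bot, finrank_span_singleton (e_ne_zero _)]

theorem hBC_two_one (hα : α ≠ 0) : hBC (delSM α β) (delbarSM α β) 2 1 = 1 := by
  rw [hBC, finrank_quotient_comap_subtype, inf_assoc, inf_eq_left.2 (Apq_two_one_le_ker α β),
    map_del_delbar_Apq_one_zero α β hα,
    Apq_eq_span {{0, 1, 2}, {0, 1, 3}} (by decide), inf_eq_right.2 (span_mono (by simp)),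
    finrank_span_e, finrank_span_singleton (e_ne_zero _)]
  rfl

theorem hBC_one_two (hα : α ≠ 0) : hBC (delSM α β) (delbarSM α β) 1 2 = 1 := by
  rw [hBC, finrank_quotient_comap_subtype, inf_assoc, inf_eq_left.2 (Apq_one_two_le_ker α β),
    map_del_delbar_Apq_zero_one α β hα,
    Apq_eq_span {{0, 2, 3}, {1, 2, 3}} (by decide), inf_eq_right.2 (span_mono (by simp)),
    finrank_span_e, finrank_span_singleton (e_ne_zero _)]
  rfl

end Cohomology

/-- For the Inoue S_M double complex (α ≠ 0): b1 = 1 (generated by φ2 - φ̄2), b2 = 0,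
b3 = 1, and the non-Kählerness degrees are Δ¹ = 0 and Δ² = 2. -/
theorem inoue_SM_delta (α β : ℝ) (hα : α ≠ 0) :
    betti (dSM α β) 1 = 1 ∧ betti (dSM α β) 2 = 0 ∧ betti (dSM α β) 3 = 1 ∧
    (Ak 1 ⊓ LinearMap.ker (dSM α β) =
      Submodule.map (dSM α β) (Ak 0) ⊔
        Submodule.span ℂ {e ({1} : Finset (Fin 4)) - e ({3} : Finset (Fin 4))}) ∧
    -- Δ¹ = 0:
    (hBC (delSM α β) (delbarSM α β) 1 0 + hBC (delSM α β) (delbarSM α β) 2 1) +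
      (hBC (delSM α β) (delbarSM α β) 0 1 + hBC (delSM α β) (delbarSM α β) 1 2) =
      2 * betti (dSM α β) 1 ∧
    -- Δ² = 2:
    (hBC (delSM α β) (delbarSM α β) 2 0 + hBC (delSM α β) (delbarSM α β) 2 0) +
      (hBC (delSM α β) (delbarSM α β) 1 1 + hBC (delSM α β) (delbarSM α β) 1 1) +
      (hBC (delSM α β) (delbarSM α β) 0 2 + hBC (delSM α β) (delbarSM α β) 0 2) =
      2 * betti (dSM α β) 2 + 2 := by
  refine ⟨betti_dSM_one α β hα, betti_dSM_two α β hα, betti_dSM_three α β hα, ?_, ?_, ?_⟩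
  · rw [map_dSM_Ak_zero, bot_sup_eq, Ak_one_inf_ker_dSM_eq_span α β hα]
  · rw [hBC_eq_zero_of_eq_bot (Apq_one_zero_inf_ker_eq_bot α β hα), hBC_two_one α β hα,
      hBC_eq_zero_of_eq_bot (Apq_zero_one_inf_ker_eq_bot α β hα), hBC_one_two α β hα,
      betti_dSM_one α β hα]
  · rw [hBC_eq_zero_of_eq_bot (Apq_two_zero_inf_ker_eq_bot α β hα), hBC_one_one α β hα,
      hBC_eq_zero_of_eq_bot (Apq_zero_two_inf_ker_eq_bot α β hα), betti_dSM_two α β hα]
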